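/- A pregeometry (S, cl) is modular if and only if the following condition (*) holds: whenever a, b ∈ S, B ⊆ S is closed and finite dimensional, dim(ab) = 2 and dim(ab/B) ≤ 1, then there is c ∈ cl(ab) ∩ cl(B) with c ∉ cl(∅). -/

import Mathlib

universe u

/-- A pregeometry: a set `S` (here a whole type `β`) together with a closure
operation `cl` satisfying extensivity and idempotence, monotonicity, exchange,
and finite character (Definition 1.2 of the paper). -/
structure Pregeometry (β : Type u) where
  cl : Set β → Set β
  subset_cl : ∀ A : Set β, A ⊆ cl A
  cl_idem : ∀ A : Set β, cl (cl A) = cl A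
  cl_mono : ∀ A B : Set β, A ⊆ B → cl A ⊆ cl B
  exchange : ∀ (A : Set β) (a b : β), a ∈ cl (insert b A) → a ∉ cl A → b ∈ cl (insert a A)
  finChar : ∀ (A : Set β) (a : β), a ∈ cl A → ∃ A₀ ⊆ A, A₀.Finite ∧ a ∈ cl A₀

namespace Pregeometry

variable {β : Type u} (G : Pregeometry β)

/-- The dimension of a set: the least cardinality of a spanning subset, i.e.
the cardinality of a basis. -/
noncomputable def dim (B : Set β) : Cardinal.{u} :=
  sInf {κ : Cardinal.{u} | ∃ J ⊆ B, B ⊆ G.cl J ∧ Cardinal.mk J = κ}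

/-- A set is closed if it equals its closure. -/
def Closed (B : Set β) : Prop := G.cl B = B

/-- A set is finite dimensional if its dimension is finite. -/
def FinDim (B : Set β) : Prop := G.dim B < Cardinal.aleph0

/-- `(S, cl)` is modular: for all closed finite-dimensional `A, B`,
`dim(A ∪ B) = dim A + dim B - dim(A ∩ B)` (stated additively). -/
def Modular : Prop :=
  ∀ A B : Set β, G.Closed A → G.Closed B → G.FinDim A → G.FinDim B →
    G.dim (A ∪ B) + G.dim (A ∩ B) = G.dim A + G.dim B

end Pregeometry


/-! A pregeometry is the closure operator of a finitary matroid whose rank function is `dim`,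
so it suffices to prove the statement for matroids. Modularity gives `(*)` directly: the line
`cl {a, b}` has rank two and raises the rank of `B` by at most one, so it meets `B` in a flat of
positive rank. Conversely, given `(*)` and flats `A`, `B`, induct on `dim (A ∪ B) - dim B`, adjoining
one point `a ∈ A \ B` to `B` at a time. The key case is `A ⊆ cl (B + a)`: for every other element
`b` of a basis of `A` through `a`, `(*)` puts a point `c ∈ A ∩ B` on the line `ab`, and exchange
puts `b` on the line `ac`; hence `A` is spanned by `a` and a subset of `A ∩ B`. -/

open Set

namespace Matroid

variable {α : Type*} {M : Matroid α} {A B : Set α} {a : α}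

lemma IsFlat.inter (hA : M.IsFlat A) (hB : M.IsFlat B) : M.IsFlat (A ∩ B) := by
  refine isFlat_iff_closure_eq.2 <| subset_antisymm (subset_inter ?_ ?_)
    (M.subset_closure _ (inter_subset_left.trans hA.subset_ground))
  · exact (M.closure_subset_closure inter_subset_left).trans hA.closure.subset
  · exact (M.closure_subset_closure inter_subset_right).trans hB.closure.subset

def FlatsModular (M : Matroid α) : Prop :=
  ∀ A B, M.IsFlat A → M.IsFlat B → M.IsRkFinite A → M.IsRkFinite B →
    M.eRk (A ∪ B) + M.eRk (A ∩ B) = M.eRk A + M.eRk B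

/-- Condition `(*)`. -/
def LinesMeetFlats (M : Matroid α) : Prop :=
  ∀ a b B, M.IsFlat B → M.IsRkFinite B → M.eRk {a, b} = 2 → M.eRk ({a, b} ∪ B) ≤ M.eRk B + 1 →
    ∃ c ∈ M.closure {a, b} ∩ B, c ∉ M.loops

lemma FlatsModular.linesMeetFlats (hM : M.FlatsModular) : M.LinesMeetFlats := by
  intro a b B hB hBfin hab hle
  have hmod := hM _ B (M.isFlat_closure {a, b}) hB
    (M.isRkFinite_of_finite (toFinite {a, b})).closure hBfin
  rw [eRk_union_closure_left_eq, eRk_closure_eq, hab] at hmod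
  by_contra! hloops
  have hzero : M.eRk (M.closure {a, b} ∩ B) = 0 :=
    nonpos_iff_eq_zero.1 <| (M.eRk_mono fun c hc ↦ hloops c hc).trans M.eRk_loops.le
  obtain ⟨n, hn⟩ := ENat.ne_top_iff_exists.1 hBfin.eRk_lt_top.ne
  rw [hzero, add_zero, ← hn] at hmod
  rw [← hn, hmod] at hle
  norm_cast at hle
  omega

lemma LinesMeetFlats.eRk_le_eRk_inter_add_one (hM : M.LinesMeetFlats) (hA : M.IsFlat A)
    (hB : M.IsFlat B) (hBfin : M.IsRkFinite B) (haA : a ∈ A) (haB : a ∉ B)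
    (hAa : A ⊆ M.closure (insert a B)) : M.eRk A ≤ M.eRk (A ∩ B) + 1 := by
  have ha : M.IsNonloop a :=
    (isNonloop_iff_notMem_loops (hA.subset_ground haA)).2 fun h ↦ haB (hB.loops_subset h)
  obtain ⟨I, hI, haI⟩ :=
    ha.indep.subset_isBasis_of_subset (singleton_subset_iff.2 haA) hA.subset_ground
  rw [singleton_subset_iff] at haI
  have hline : ∀ b ∈ I \ {a}, ∃ c ∈ A ∩ B, b ∈ M.closure {a, c} := by
    rintro b ⟨hbI, hba⟩
    have hbA := hI.subset hbI
    have hab : M.eRk {a, b} = 2 := by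
      rw [(hI.indep.subset (pair_subset haI hbI)).eRk_eq_encard, encard_pair (Ne.symm hba)]
    have habB : M.eRk ({a, b} ∪ B) ≤ M.eRk B + 1 := by
      calc M.eRk ({a, b} ∪ B) ≤ M.eRk (M.closure (insert a B)) :=
            M.eRk_mono <| union_subset (pair_subset (hAa haA) (hAa hbA))
              ((subset_insert a B).trans (M.subset_closure _ (insert_subset
                (hA.subset_ground haA) hB.subset_ground)))
        _ ≤ M.eRk B + 1 := by rw [eRk_closure_eq]; exact M.eRk_insert_le_add_one a B
    obtain ⟨c, ⟨hcab, hcB⟩, hc⟩ := hM a b B hB hBfin hab habB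
    have hcA : c ∈ A := hA.closure.subset <| M.closure_subset_closure (pair_subset haA hbA) hcab
    have hca : c ∉ M.closure {a} := fun h ↦ haB <| hB.closure.subset <|
      M.closure_subset_closure (singleton_subset_iff.2 hcB) (by
        simpa using M.mem_closure_insert (X := ∅) hc (by simpa using h))
    refine ⟨c, ⟨hcA, hcB⟩, ?_⟩
    have := M.mem_closure_insert hca (by rwa [pair_comm] at hcab)
    rwa [pair_comm] at this
  choose! f hfAB hf using hline
  have hspan : A ⊆ M.closure (insert a (f '' (I \ {a}))) := by
    refine hI.subset_closure.trans (M.closure_subset_closure_of_subset_closure fun b hbI ↦ ?_)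
    obtain rfl | hba := eq_or_ne b a
    · exact M.mem_closure_of_mem' (mem_insert b _) (hA.subset_ground haA)
    · have hb : b ∈ I \ {a} := ⟨hbI, hba⟩
      exact M.closure_subset_closure
        (pair_subset (mem_insert a _) (mem_insert_of_mem a (mem_image_of_mem f hb))) (hf b hb)
  calc M.eRk A ≤ M.eRk (insert a (f '' (I \ {a}))) := by
        rw [← eRk_closure_eq M (insert a _)]; exact M.eRk_mono hspan
    _ ≤ M.eRk (f '' (I \ {a})) + 1 := M.eRk_insert_le_add_one a _
    _ ≤ M.eRk (A ∩ B) + 1 := by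
        gcongr; exact M.eRk_mono (image_subset_iff.2 hfAB)

lemma LinesMeetFlats.eRk_le_eRk_inter_add (hM : M.LinesMeetFlats) (d : ℕ) (hA : M.IsFlat A)
    (hB : M.IsFlat B) (hBfin : M.IsRkFinite B) (hle : M.eRk (A ∪ B) ≤ M.eRk B + d) :
    M.eRk A ≤ M.eRk (A ∩ B) + d := by
  induction d generalizing B with
  | zero =>
    rw [Nat.cast_zero, add_zero] at hle ⊢
    have hAB : A ∪ B ⊆ B := by
      have hcl := hBfin.closure_eq_closure_of_subset_of_eRk_ge_eRk subset_union_right hle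
      rw [hB.closure] at hcl
      exact (M.subset_closure _ (union_subset hA.subset_ground hB.subset_ground)).trans hcl.ge
    rw [inter_eq_left.2 (subset_union_left.trans hAB)]
  | succ d ih =>
    by_cases hAB : A ⊆ B
    · rw [inter_eq_left.2 hAB]; exact le_self_add
    obtain ⟨a, haA, haB⟩ := not_subset.1 hAB
    have haE : insert a B ⊆ M.E := insert_subset (hA.subset_ground haA) hB.subset_ground
    set B' := M.closure (insert a B)
    have hBB' : B ⊆ B' := (subset_insert a B).trans (M.subset_closure _ haE)
    have hle' : M.eRk (A ∪ B') ≤ M.eRk B' + d := by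
      rw [eRk_union_closure_right_eq, union_insert, insert_eq_of_mem (mem_union_left B haA),
        eRk_closure_eq, eRk_insert_eq_add_one ⟨hA.subset_ground haA, by rwa [hB.closure]⟩]
      rwa [Nat.cast_succ, add_comm (d : ℕ∞), ← add_assoc] at hle
    have hstep : M.eRk (A ∩ B') ≤ M.eRk (A ∩ B' ∩ B) + 1 :=
      hM.eRk_le_eRk_inter_add_one (hA.inter (M.isFlat_closure _)) hB hBfin
        ⟨haA, M.mem_closure_of_mem (mem_insert a B) haE⟩ haB inter_subset_right
    rw [inter_assoc, inter_eq_right.2 hBB'] at hstep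
    calc M.eRk A ≤ M.eRk (A ∩ B') + d := ih (M.isFlat_closure _) (hBfin.insert a).closure hle'
      _ ≤ M.eRk (A ∩ B) + 1 + d := by gcongr
      _ = M.eRk (A ∩ B) + (d + 1 : ℕ) := by push_cast; ring

lemma LinesMeetFlats.flatsModular (hM : M.LinesMeetFlats) : M.FlatsModular := by
  intro A B hA hB hAfin hBfin
  obtain ⟨d, hd⟩ := le_iff_exists_add.1 (M.eRk_mono (subset_union_right (s := A) (t := B)))
  lift d to ℕ using fun h ↦ (hAfin.union hBfin).eRk_lt_top.ne (by rw [hd, h, add_top])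
  refine le_antisymm (by rw [add_comm]; exact M.eRk_inter_add_eRk_union_le A B) ?_
  calc M.eRk A + M.eRk B ≤ M.eRk (A ∩ B) + d + M.eRk B := by
        gcongr; exact hM.eRk_le_eRk_inter_add d hA hB hBfin hd.le
    _ = M.eRk (A ∪ B) + M.eRk (A ∩ B) := by rw [hd]; ring

theorem flatsModular_iff_linesMeetFlats : M.FlatsModular ↔ M.LinesMeetFlats :=
  ⟨FlatsModular.linesMeetFlats, LinesMeetFlats.flatsModular⟩

end Matroid

namespace Pregeometry

variable {β : Type u} {G : Pregeometry β} {I J X Y : Set β} {a : β}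

def Indep (G : Pregeometry β) (I : Set β) : Prop := ∀ a ∈ I, a ∉ G.cl (I \ {a})

lemma cl_subset_cl_of_subset_cl (h : X ⊆ G.cl Y) : G.cl X ⊆ G.cl Y :=
  G.cl_idem Y ▸ G.cl_mono _ _ h

lemma Indep.subset (hJ : G.Indep J) (hIJ : I ⊆ J) : G.Indep I :=
  fun a ha hcl ↦ hJ a (hIJ ha) (G.cl_mono _ _ (sdiff_subset_sdiff_left hIJ) hcl)

lemma Indep.insert_indep_iff (hI : G.Indep I) (haI : a ∉ I) :
    G.Indep (insert a I) ↔ a ∉ G.cl I := by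
  refine ⟨fun h ↦ by simpa [haI] using h a (mem_insert a I), fun ha b hb hbcl ↦ ?_⟩
  rcases hb with rfl | hbI
  · exact ha (by simpa [haI] using hbcl)
  have hba : b ≠ a := fun h ↦ haI (h ▸ hbI)
  -- exchange: `b` is spanned by `I - b + a` but not by `I - b`
  rw [← insert_sdiff_singleton_comm hba.symm] at hbcl
  have := G.exchange _ b a hbcl (hI b hbI)
  rw [insert_sdiff_singleton, insert_eq_of_mem hbI] at this
  exact ha this

lemma indep_of_forall_finite (h : ∀ J ⊆ I, J.Finite → G.Indep J) : G.Indep I := by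
  intro a haI hacl
  obtain ⟨J, hJI, hJfin, haJ⟩ := G.finChar _ a hacl
  have haJ' : a ∉ J := fun h ↦ (hJI h).2 rfl
  refine (h (insert a J) (insert_subset haI (hJI.trans sdiff_subset)) (hJfin.insert a)) a
    (mem_insert a J) ?_
  rwa [insert_sdiff_self_of_notMem haJ']

lemma Indep.exists_insert_indep (hI : G.Indep I) (hImax : ¬ Maximal G.Indep I)
    (hJmax : Maximal G.Indep J) : ∃ x ∈ J \ I, G.Indep (insert x I) := by
  obtain ⟨e, heI, he⟩ := exists_insert_of_not_maximal (fun _ _ h hs ↦ Indep.subset h hs) hI hImax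
  by_contra! hJI
  have hJ : J ⊆ G.cl I := fun x hxJ ↦ by
    by_cases hxI : x ∈ I
    · exact G.subset_cl I hxI
    · exact not_not.1 ((hI.insert_indep_iff hxI).not.1 (hJI x ⟨hxJ, hxI⟩))
  have heJ : e ∈ G.cl J := by
    by_contra heJ
    have heJ' : e ∉ J := fun h ↦ heJ (G.subset_cl J h)
    exact heJ' (hJmax.2 ((hJmax.1.insert_indep_iff heJ').2 heJ) (subset_insert e J)
      (mem_insert e J))
  exact (hI.insert_indep_iff heI).1 he (cl_subset_cl_of_subset_cl hJ heJ)

variable (G) in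
def toMatroid : Matroid β :=
  (IndepMatroid.ofFinitary univ G.Indep (fun _ h ↦ h.elim) (fun _ _ h hs ↦ h.subset hs)
    (fun _ _ hI hImax hJmax ↦ hI.exists_insert_indep hImax hJmax)
    (fun _ h ↦ indep_of_forall_finite h) (fun _ _ ↦ subset_univ _)).matroid

@[simp] lemma toMatroid_ground : G.toMatroid.E = univ := rfl

instance : G.toMatroid.Finitary :=
  IndepMatroid.ofFinitary_finitary _ _ _ _ _ _ _

lemma toMatroid_indep : G.toMatroid.Indep I ↔ G.Indep I := Iff.rfl

lemma toMatroid_closure_of_indep (hI : G.Indep I) : G.toMatroid.closure I = G.cl I := by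
  ext a
  by_cases haI : a ∈ I
  · exact iff_of_true (G.toMatroid.mem_closure_of_mem' haI (by simp)) (G.subset_cl I haI)
  have h := (toMatroid_indep.2 hI).insert_indep_iff_of_notMem haI
  rw [toMatroid_indep, hI.insert_indep_iff haI, toMatroid_ground, mem_sdiff,
    and_iff_right (mem_univ a)] at h
  exact not_iff_not.1 h.symm

lemma toMatroid_closure (X : Set β) : G.toMatroid.closure X = G.cl X := by
  obtain ⟨I, hI⟩ := G.toMatroid.exists_isBasis X (by simp)
  have hIcl := toMatroid_closure_of_indep (toMatroid_indep.1 hI.indep)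
  rw [← hI.closure_eq_closure, hIcl]
  exact subset_antisymm (G.cl_mono _ _ hI.subset)
    (cl_subset_cl_of_subset_cl (hIcl ▸ hI.subset_closure))

lemma dim_eq_cRk (X : Set β) : G.dim X = G.toMatroid.cRk X := by
  obtain ⟨I, hI⟩ := G.toMatroid.exists_isBasis X (by simp)
  refine le_antisymm (csInf_le' ⟨I, hI.subset, ?_, hI.cardinalMk_eq_cRk⟩) ?_
  · rw [← toMatroid_closure]; exact hI.subset_closure
  refine le_csInf ⟨_, X, subset_rfl, G.subset_cl X, rfl⟩ ?_
  rintro _ ⟨J, hJX, hXJ, rfl⟩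
  have hcl : G.toMatroid.closure X = G.toMatroid.closure J := by
    simp only [toMatroid_closure]
    exact subset_antisymm (cl_subset_cl_of_subset_cl hXJ) (G.cl_mono _ _ hJX)
  rw [G.toMatroid.cRk_closure_congr hcl]
  exact G.toMatroid.cRk_le_cardinalMk J

lemma closed_iff_isFlat : G.Closed X ↔ G.toMatroid.IsFlat X := by
  rw [Matroid.isFlat_iff_closure_eq, toMatroid_closure, Closed]

lemma finDim_iff_isRkFinite : G.FinDim X ↔ G.toMatroid.IsRkFinite X := by
  rw [FinDim, dim_eq_cRk, Matroid.isRkFinite_iff_cRk_lt_aleph0]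

lemma dim_eq_eRk (hX : G.toMatroid.IsRkFinite X) : G.dim X = G.toMatroid.eRk X := by
  rw [← Matroid.toENat_cRk_eq, dim_eq_cRk, Cardinal.ofENat_toENat]
  exact (Matroid.isRkFinite_iff_cRk_lt_aleph0.1 hX).le

lemma modular_iff_flatsModular : G.Modular ↔ G.toMatroid.FlatsModular := by
  simp only [Modular, Matroid.FlatsModular, closed_iff_isFlat, finDim_iff_isRkFinite]
  refine forall₂_congr fun A B ↦ forall₄_congr fun _ _ hA hB ↦ ?_
  rw [dim_eq_eRk (hA.union hB), dim_eq_eRk hA.inter_right, dim_eq_eRk hA, dim_eq_eRk hB,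
    ← Cardinal.ofENat_add, ← Cardinal.ofENat_add, Cardinal.ofENat_inj]

lemma toMatroid_linesMeetFlats_iff : G.toMatroid.LinesMeetFlats ↔
    ∀ (a b : β) (B : Set β), G.Closed B → G.FinDim B →
      G.dim {a, b} = 2 → G.dim ({a, b} ∪ B) ≤ G.dim B + 1 →
      ∃ c, c ∈ G.cl {a, b} ∩ G.cl B ∧ c ∉ G.cl (∅ : Set β) := by
  simp only [Matroid.LinesMeetFlats, closed_iff_isFlat, finDim_iff_isRkFinite]
  refine forall₃_congr fun a b B ↦ forall₂_congr fun hB hBfin ↦ ?_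
  have hpair : G.toMatroid.IsRkFinite {a, b} := G.toMatroid.isRkFinite_of_finite (toFinite _)
  rw [dim_eq_eRk hpair, dim_eq_eRk (hpair.union hBfin), dim_eq_eRk hBfin, ← toMatroid_closure,
    ← toMatroid_closure, hB.closure, ← toMatroid_closure, Matroid.closure_empty,
    ← Cardinal.ofENat_one, ← Cardinal.ofENat_add, Cardinal.ofENat_le_ofENat]
  simp only [Cardinal.ofENat_eq_ofNat]

end Pregeometry

/-- A pregeometry `(S, cl)` is modular iff the following condition `(*)`
holds: whenever `a, b ∈ S`, `B ⊆ S` is closed and finite dimensional,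
`dim(ab) = 2` and `dim(ab/B) ≤ 1` (i.e. `dim({a,b} ∪ B) ≤ dim B + 1`), then
there is `c ∈ cl(ab) ∩ cl(B)` with `c ∉ cl(∅)`. -/
theorem pregeometry_modular_iff_criterion {β : Type u} (G : Pregeometry β) :
    G.Modular ↔
      ∀ (a b : β) (B : Set β), G.Closed B → G.FinDim B →
        G.dim {a, b} = 2 → G.dim ({a, b} ∪ B) ≤ G.dim B + 1 →
        ∃ c, c ∈ G.cl {a, b} ∩ G.cl B ∧ c ∉ G.cl (∅ : Set β) := by
  rw [G.modular_iff_flatsModular, Matroid.flatsModular_iff_linesMeetFlats]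
  exact Pregeometry.toMatroid_linesMeetFlats_iff
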